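/- Let p be an odd prime, 1 ≤ w < p, 0 ≤ l < p, and D_l = {u : 0 ≤ u < p², gcd(u,p)=1, q_{p,w}(u)=l}. Then over F_p, the polynomial D_l(X) = Σ_{u∈D_l} X^u satisfies D_l(X) ≡ (X−1)^{p−1} − 1 (mod X^p − 1). -/
import Mathlib


/-- The polynomial quotient `q_{p,w}(u)`. -/
def polyQuot (p w u : ℕ) : ℕ := ((((u : ℤ) ^ w - (u : ℤ) ^ (w * p)) / (p : ℤ)) % (p : ℤ)).toNat

/-- The set `D_l = {u : 0 ≤ u < p², gcd(u,p)=1, q_{p,w}(u) = l}`. -/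
def Dl (p w l : ℕ) : Finset ℕ :=
  (Finset.range (p ^ 2)).filter (fun u => Nat.gcd u p = 1 ∧ polyQuot p w u = l)

lemma pq_lt (p w u : ℕ) (hp : 0 < p) : polyQuot p w u < p := by
  unfold polyQuot
  have h : (0:ℤ) < p := by exact_mod_cast hp
  have h2 := Int.emod_lt_of_pos (((u:ℤ)^w - (u:ℤ)^(w*p))/(p:ℤ)) h
  have h3 := Int.emod_nonneg (((u:ℤ)^w - (u:ℤ)^(w*p))/(p:ℤ)) (ne_of_gt h)
  omega

lemma fermat_dvd (p w u : ℕ) (hp : p.Prime) : (p:ℤ) ∣ (u : ℤ) ^ w - (u : ℤ) ^ (w * p) := by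
  haveI := Fact.mk hp
  have h : (((u : ℤ) ^ w - (u : ℤ) ^ (w * p) : ℤ) : ZMod p) = 0 := by
    push_cast
    rw [mul_comm w p, pow_mul, ZMod.pow_card, sub_self]
  exact_mod_cast (ZMod.intCast_zmod_eq_zero_iff_dvd _ _).mp h

lemma pq_inj (p w r : ℕ) (hp : p.Prime) (hw1 : 1 ≤ w) (hwp : w < p) (hr : ¬ p ∣ r)
    {k1 k2 : ℕ} (hk1 : k1 < p) (hk2 : k2 < p)
    (h : polyQuot p w (r + k1 * p) = polyQuot p w (r + k2 * p)) : k1 = k2 := by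
  haveI := Fact.mk hp
  have hp0 : (0:ℤ) < p := by exact_mod_cast hp.pos
  unfold polyQuot at h
  set u1 : ℤ := ((r + k1 * p : ℕ) : ℤ) with hu1
  set u2 : ℤ := ((r + k2 * p : ℕ) : ℤ) with hu2
  set A1 : ℤ := u1 ^ w - u1 ^ (w * p) with hA1
  set A2 : ℤ := u2 ^ w - u2 ^ (w * p) with hA2
  have hd1 : (p:ℤ) ∣ A1 := fermat_dvd p w _ hp
  have hd2 : (p:ℤ) ∣ A2 := fermat_dvd p w _ hp
  have e1 := Int.emod_nonneg (A1/(p:ℤ)) (ne_of_gt hp0)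
  have e2 := Int.emod_nonneg (A2/(p:ℤ)) (ne_of_gt hp0)
  have hmod : A1/(p:ℤ) % p = A2/(p:ℤ) % p := by omega
  have hdq : (p:ℤ) ∣ A2/(p:ℤ) - A1/(p:ℤ) := Int.ModEq.dvd hmod
  have hAA : (p:ℤ)^2 ∣ A2 - A1 := by
    obtain ⟨c, hc⟩ := hdq
    refine ⟨c, ?_⟩
    have h1 : (p:ℤ) * (A1/(p:ℤ)) = A1 := Int.mul_ediv_cancel' hd1
    have h2 : (p:ℤ) * (A2/(p:ℤ)) = A2 := Int.mul_ediv_cancel' hd2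
    calc A2 - A1 = (p:ℤ) * (A2/(p:ℤ) - A1/(p:ℤ)) := by rw [mul_sub, h1, h2]
    _ = (p:ℤ)^2 * c := by rw [hc]; ring
  -- p^2 divides u2^(w*p) - u1^(w*p)
  have hdsub : (p:ℤ) ∣ u2 - u1 := ⟨(k2:ℤ) - k1, by rw [hu1, hu2]; push_cast; ring⟩
  have hpp : (p:ℤ)^2 ∣ u2 ^ (w*p) - u1 ^ (w*p) := by
    have h1 := dvd_sub_pow_of_dvd_sub hdsub 1
    simp only [pow_one] at h1
    have h2 : u2 ^ p - u1 ^ p ∣ u2 ^ (w*p) - u1 ^ (w*p) := by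
      rw [mul_comm w p, pow_mul, pow_mul]
      exact sub_dvd_pow_sub_pow _ _ w
    exact h1.trans h2
  -- hence p^2 divides u2^w - u1^w
  have hww : (p:ℤ)^2 ∣ u2 ^ w - u1 ^ w := by
    have : u2 ^ w - u1 ^ w = (A2 - A1) + (u2 ^ (w*p) - u1 ^ (w*p)) := by
      rw [hA1, hA2]; ring
    rw [this]
    exact dvd_add hAA hpp
  -- factor: S * (u2 - u1) = u2^w - u1^w
  set S : ℤ := ∑ i ∈ Finset.range w, u2 ^ i * u1 ^ (w - 1 - i) with hS
  have hfac : S * (u2 - u1) = u2 ^ w - u1 ^ w := geom_sum₂_mul u2 u1 w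
  have hu21 : u2 - u1 = ((k2:ℤ) - k1) * p := by rw [hu1, hu2]; push_cast; ring
  have hkey : (p:ℤ) ∣ S * ((k2:ℤ) - k1) := by
    obtain ⟨c, hc⟩ := hww
    rw [← hfac, hu21] at hc
    have h5 : (S * ((k2:ℤ) - k1)) * p = ((p:ℤ) * c) * p := by linear_combination hc
    exact ⟨c, mul_right_cancel₀ (ne_of_gt hp0) h5⟩
  -- move to ZMod p
  have hz : ((S * ((k2:ℤ) - k1) : ℤ) : ZMod p) = 0 :=
    (ZMod.intCast_zmod_eq_zero_iff_dvd _ _).mpr (by exact_mod_cast hkey)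
  have hScast : ((S : ℤ) : ZMod p) = (w : ZMod p) * (r : ZMod p) ^ (w - 1) := by
    rw [hS]
    push_cast [hu1, hu2, ZMod.natCast_self]
    rw [Finset.sum_congr rfl (fun i hi => ?_)]
    · rw [Finset.sum_const, Finset.card_range, nsmul_eq_mul]
    · rw [mul_zero, add_zero, mul_zero, add_zero, ← pow_add]
      congr 1
      have := Finset.mem_range.mp hi
      omega
  rw [Int.cast_mul, hScast] at hz
  have hw0 : (w : ZMod p) ≠ 0 := by
    rw [Ne, ZMod.natCast_eq_zero_iff]
    intro hd
    have := Nat.le_of_dvd (by omega) hd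
    omega
  have hr0 : (r : ZMod p) ≠ 0 := by
    rw [Ne, ZMod.natCast_eq_zero_iff]
    exact hr
  have hk : (((k2:ℤ) - k1 : ℤ) : ZMod p) = 0 := by
    rcases mul_eq_zero.mp hz with h' | h'
    · exact absurd h' (mul_ne_zero hw0 (pow_ne_zero _ hr0))
    · exact h'
  push_cast at hk
  have : (k1 : ZMod p) = (k2 : ZMod p) := by linear_combination -hk
  have hv := congrArg ZMod.val this
  rwa [ZMod.val_cast_of_lt hk1, ZMod.val_cast_of_lt hk2] at hv

lemma pq_exists (p w r l : ℕ) (hp : p.Prime) (hw1 : 1 ≤ w) (hwp : w < p) (hr : ¬ p ∣ r)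
    (hl : l < p) : ∃ k, k < p ∧ polyQuot p w (r + k * p) = l := by
  have hs := Finset.surj_on_of_inj_on_of_card_le
    (s := Finset.range p) (t := Finset.range p)
    (fun k _ => polyQuot p w (r + k * p))
    (fun k hk => Finset.mem_range.mpr (pq_lt p w _ hp.pos))
    (fun k1 k2 h1 h2 h => pq_inj p w r hp hw1 hwp hr
      (Finset.mem_range.mp h1) (Finset.mem_range.mp h2) h)
    le_rfl l (Finset.mem_range.mpr hl)
  obtain ⟨k, hk, hkl⟩ := hs
  exact ⟨k, Finset.mem_range.mp hk, hkl.symm⟩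

lemma not_dvd_of_gcd (p u : ℕ) (hp : p.Prime) (h : Nat.gcd u p = 1) : ¬ p ∣ u :=
  (hp.coprime_iff_not_dvd).mp (Nat.Coprime.symm h)

theorem stmt_11 (p w l : ℕ) (hp : p.Prime) (hodd : Odd p)
    (hw1 : 1 ≤ w) (hwp : w < p) (hl : l < p) :
    ((Polynomial.X : Polynomial (ZMod p)) ^ p - 1) ∣
      ((∑ u ∈ Dl p w l, Polynomial.X ^ u) -
        ((Polynomial.X - 1) ^ (p - 1) - 1)) := by
  haveI := Fact.mk hp
  have hp0 : 0 < p := hp.pos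
  set X : Polynomial (ZMod p) := Polynomial.X with hX
  have hgeom : (X - 1) ^ (p - 1) = ∑ i ∈ Finset.range p, X ^ i := by
    have hchar : (X - 1) ^ p = X ^ p - 1 := by
      simpa using sub_pow_char X (1 : Polynomial (ZMod p))
    have hXne : X - 1 ≠ 0 := by
      have := Polynomial.X_sub_C_ne_zero (R := ZMod p) 1
      simpa using this
    apply mul_right_cancel₀ hXne
    rw [geom_sum_mul, ← hchar, ← pow_succ]
    congr 1
    omega
  have hsplit : (X - 1) ^ (p - 1) - 1 = ∑ i ∈ Finset.Ico 1 p, X ^ i := by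
    rw [hgeom, Finset.range_eq_Ico, Finset.sum_eq_sum_Ico_succ_bot hp0]
    simp
  have hbij : ∑ u ∈ Dl p w l, X ^ (u % p) = ∑ i ∈ Finset.Ico 1 p, X ^ i := by
    apply Finset.sum_nbij (i := fun u => u % p)
    · intro u hu
      simp only [Dl, Finset.mem_filter, Finset.mem_range] at hu
      obtain ⟨hu2, hgcd, hq⟩ := hu
      have hndvd : ¬ p ∣ u := not_dvd_of_gcd p u hp hgcd
      have : u % p ≠ 0 := fun h0 => hndvd (Nat.dvd_of_mod_eq_zero h0)
      exact Finset.mem_Ico.mpr ⟨Nat.one_le_iff_ne_zero.mpr this, Nat.mod_lt _ hp0⟩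
    · intro u1 hu1 u2 hu2 heq
      simp only [Finset.coe_filter, Set.mem_setOf_eq, Dl, Finset.mem_coe, Finset.mem_filter,
        Finset.mem_range] at hu1 hu2
      obtain ⟨h1a, h1b, h1c⟩ := hu1
      obtain ⟨h2a, h2b, h2c⟩ := hu2
      simp only at heq
      have hndvd : ¬ p ∣ u1 := not_dvd_of_gcd p u1 hp h1b
      have hrr : ¬ p ∣ (u1 % p) := fun hd => hndvd ((Nat.dvd_mod_iff dvd_rfl).mp hd)
      have hq1 : u1 / p < p := Nat.div_lt_of_lt_mul (by rwa [← pow_two])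
      have hq2 : u2 / p < p := Nat.div_lt_of_lt_mul (by rwa [← pow_two])
      have hpp : polyQuot p w (u1 % p + (u1 / p) * p) = polyQuot p w (u1 % p + (u2 / p) * p) := by
        rw [Nat.mod_add_div', heq, Nat.mod_add_div', h1c, h2c]
      have hdiv := pq_inj p w (u1 % p) hp hw1 hwp hrr hq1 hq2 hpp
      have e1 := Nat.div_add_mod u1 p
      have e2 := Nat.div_add_mod u2 p
      have e3 : p * (u1 / p) = p * (u2 / p) := by rw [hdiv]
      omega
    · intro r hr
      simp only [Finset.coe_Ico, Set.mem_Ico] at hr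
      obtain ⟨hr1, hr2⟩ := hr
      have hndvd : ¬ p ∣ r := fun hd => by
        have := Nat.le_of_dvd (by omega) hd; omega
      obtain ⟨k, hk, hq⟩ := pq_exists p w r l hp hw1 hwp hndvd hl
      refine ⟨r + k * p, ?_, ?_⟩
      · simp only [Dl, Finset.mem_coe, Finset.mem_filter, Finset.mem_range]
        refine ⟨?_, ?_, hq⟩
        · have e1 : (k + 1) * p = k * p + p := by ring
          have e2 : p ^ 2 = p * p := pow_two p
          have h4 : (k + 1) * p ≤ p * p := Nat.mul_le_mul_right p (by omega)
          omega
        · have hnd : ¬ p ∣ (r + k * p) := fun hd => by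
            have h5 : p ∣ k * p := dvd_mul_left p k
            have h6 := Nat.dvd_sub hd h5
            rw [Nat.add_sub_cancel] at h6
            exact hndvd h6
          exact Nat.Coprime.symm ((hp.coprime_iff_not_dvd).mpr hnd)
      · simp only
        rw [Nat.add_mul_mod_self_right, Nat.mod_eq_of_lt hr2]
    · intro u hu; rfl
  rw [hsplit, ← hbij, ← Finset.sum_sub_distrib]
  apply Finset.dvd_sum
  intro u hu
  have hterm : X ^ u - X ^ (u % p) = ((X ^ p) ^ (u / p) - 1) * X ^ (u % p) := by
    rw [sub_mul, one_mul, ← pow_mul, ← pow_add, Nat.div_add_mod]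
  rw [hterm]
  exact Dvd.dvd.mul_right (by simpa using sub_dvd_pow_sub_pow (X ^ p) 1 (u / p)) _
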